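/- arXiv:1404.4210 — 4 statements merged into one kernel-verified Lean document; each statement's English description precedes it below -/
import Mathlib

section
/- Let G₁, …, G_K be pairwise distinct distribution functions on S ⊆ ℝ^q. Then there exist points y₁, …, y_m ∈ S with m = K(K−1)/2 such that the K × (m+1) matrix whose (i,j)-entry is G_i(y_j) for j ≤ m and whose last column is the all-ones vector has Kruskal rank at least two, i.e., every pair of rows of this matrix is linearly independent. -/
lemma enc_step {i k : ℕ} (h : i < k) : k.choose 2 + i < (k+1).choose 2 := by
  have h1 : (k+1).choose 2 = k.choose 1 + k.choose 2 := Nat.choose_succ_succ k 1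
  have h2 : k.choose 1 = k := Nat.choose_one_right k
  omega

lemma enc_lt {i k K : ℕ} (hik : i < k) (hk : k < K) : k.choose 2 + i < K.choose 2 := by
  have h1 := enc_step hik
  have h2 : (k+1).choose 2 ≤ K.choose 2 := Nat.choose_le_choose 2 hk
  omega

lemma enc_inj {i k i' k' : ℕ} (h : i < k) (h' : i' < k')
    (he : k.choose 2 + i = k'.choose 2 + i') : i = i' ∧ k = k' := by
  rcases lt_trichotomy k k' with hlt | heq | hgt
  · have := enc_step h
    have : (k+1).choose 2 ≤ k'.choose 2 := Nat.choose_le_choose 2 hlt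
    omega
  · subst heq; omega
  · have := enc_step h'
    have : (k'+1).choose 2 ≤ k.choose 2 := Nat.choose_le_choose 2 hgt
    omega

lemma li_pair_of_last_one {n : ℕ} (u v : Fin (n+1) → ℝ)
    (hu : u (Fin.last n) = 1) (hv : v (Fin.last n) = 1)
    (j : Fin (n+1)) (hj : u j ≠ v j) : LinearIndependent ℝ ![u, v] := by
  rw [LinearIndependent.pair_iff]
  intro s t h
  have h1 := congrFun h (Fin.last n)
  have h2 := congrFun h j
  simp only [Pi.add_apply, Pi.smul_apply, smul_eq_mul, Pi.zero_apply, hu, hv,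
    mul_one] at h1 h2
  have hst : s = -t := by linarith
  have : t * (v j - u j) = 0 := by rw [hst] at h2; ring_nf; ring_nf at h2; linarith
  rcases mul_eq_zero.mp this with ht | hd
  · constructor <;> [skip; exact ht]; rw [hst, ht, neg_zero]
  · exact absurd (by linarith : u j = v j) hj

/-- For pairwise distinct distribution functions `G₁,…,G_K` on `S ⊆ ℝ^q`, there are
`m = K(K−1)/2` points such that the `K × (m+1)` matrix `[{G i (y j)}, 1_K]` has Kruskal
rank at least two, i.e., every pair of its rows is linearly independent. -/
theorem exists_points_kruskal_rank_two
    {q K : ℕ} (S : Set (Fin q → ℝ)) (G : Fin K → (Fin q → ℝ) → ℝ)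
    (hdistinct : ∀ i j : Fin K, i ≠ j → ∃ y ∈ S, G i y ≠ G j y) :
    ∃ y : Fin (K * (K - 1) / 2) → (Fin q → ℝ),
      (∀ j, y j ∈ S) ∧
      ∀ i k : Fin K, i ≠ k →
        LinearIndependent ℝ
          ![(fun j : Fin (K * (K - 1) / 2 + 1) =>
              if h : (j : ℕ) < K * (K - 1) / 2 then G i (y ⟨j, h⟩) else 1),
            (fun j : Fin (K * (K - 1) / 2 + 1) =>
              if h : (j : ℕ) < K * (K - 1) / 2 then G k (y ⟨j, h⟩) else 1)] := by
  have hmc : K * (K - 1) / 2 = K.choose 2 := (Nat.choose_two_right K).symm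
  rcases Nat.lt_or_ge K 2 with hK | hK
  · -- K ≤ 1 : no pairs, m = 0
    have hm0 : K * (K - 1) / 2 = 0 := by interval_cases K <;> simp
    refine ⟨fun j => absurd j.isLt (by omega),
      fun j => absurd j.isLt (by omega), fun i k hik => ?_⟩
    have hi := i.isLt
    have hk := k.isLt
    exact absurd (Fin.val_injective (by omega : (i : ℕ) = k)) hik
  · -- K ≥ 2
    have h01 : (⟨0, by omega⟩ : Fin K) ≠ ⟨1, by omega⟩ := by simp [Fin.ext_iff]
    obtain ⟨s₀, hs₀, -⟩ := hdistinct _ _ h01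
    choose w hwS hw using hdistinct
    set m := K * (K - 1) / 2 with hm
    set P : Fin m → Prop :=
      fun j => ∃ p : Fin K × Fin K, p.1 < p.2 ∧ (p.2 : ℕ).choose 2 + (p.1 : ℕ) = (j : ℕ)
      with hP
    set y : Fin m → (Fin q → ℝ) :=
      fun j => if h : P j then w h.choose.1 h.choose.2 h.choose_spec.1.ne else s₀ with hy
    have hyS : ∀ j, y j ∈ S := by
      intro j
      simp only [hy]
      split
      · exact hwS _ _ _
      · exact hs₀
    have key : ∀ i k : Fin K, i < k → ∃ j : Fin m, G i (y j) ≠ G k (y j) := by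
      intro i k hik
      have hlt : (k : ℕ).choose 2 + (i : ℕ) < m := by
        have h2 := enc_lt hik k.isLt
        have h3 : K * (K - 1) / 2 = K.choose 2 := (Nat.choose_two_right K).symm
        omega
      refine ⟨⟨(k : ℕ).choose 2 + (i : ℕ), hlt⟩, ?_⟩
      set j : Fin m := ⟨(k : ℕ).choose 2 + (i : ℕ), hlt⟩ with hj
      have hPj : P j := ⟨(i, k), hik, rfl⟩
      have hyj : y j = w hPj.choose.1 hPj.choose.2 hPj.choose_spec.1.ne := by
        rw [hy]; exact dif_pos hPj
      obtain ⟨hplt, hpenc⟩ := hPj.choose_spec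
      have henc : (hPj.choose.2 : ℕ).choose 2 + (hPj.choose.1 : ℕ)
          = (k : ℕ).choose 2 + (i : ℕ) := hpenc
      obtain ⟨h1, h2⟩ := enc_inj hplt hik henc
      have e1 : hPj.choose.1 = i := Fin.val_injective h1
      have e2 : hPj.choose.2 = k := Fin.val_injective h2
      rw [hyj, ← e1, ← e2]
      exact hw _ _ _
    refine ⟨y, hyS, fun i k hik => ?_⟩
    have hdiff : ∃ j : Fin m, G i (y j) ≠ G k (y j) := by
      rcases hik.lt_or_gt with h | h
      · exact key i k h
      · obtain ⟨j, hj⟩ := key k i h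
        exact ⟨j, fun he => hj he.symm⟩
    obtain ⟨j, hj⟩ := hdiff
    apply li_pair_of_last_one _ _ ?_ ?_ (j.castSucc)
    · simp only [Fin.coe_castSucc]
      rw [dif_pos j.isLt]
      rw [dif_pos j.isLt]
      exact hj
    · rw [dif_neg (by simp [Fin.last])]
    · rw [dif_neg (by simp [Fin.last])]
end

section
/- Let t ≤ K−1, let v₁, …, v_t ∈ ℝ^K be linearly independent with all entries of v₁ strictly positive, let Γ be a K×K stochastic matrix of full rank, and let F₁, …, F_K be pairwise distinct distribution functions on S. Then there exist y ∈ S and j ∈ {1,…,t} such that, with D_y = diag(F₁(y), …, F_K(y)), the K×(t+1) matrix [Γv₁, …, Γv_t, D_y Γ v_j] has full rank t+1. -/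
/-!
If no `y ∈ S` and `j` work, the span `W` of the `Γ vᵢ` is stable under every `D_y`, `y ∈ S`,
hence under the subalgebra of `ℝ^K` (pointwise product) that the vectors `(F_k(y))_k`
generate. These vectors separate the coordinates because the `F_k` are pairwise distinct, so
that subalgebra is all of `ℝ^K` and `W` is an ideal of `ℝ^K`. But `W` contains `Γ v₁`, whose
entries are positive since `Γ` is stochastic, i.e. a unit; hence `W = ℝ^K`, contradicting
`dim W = t < K`.
-/

open Matrix

namespace Submodule

variable {R A : Type*} [CommSemiring R] [Semiring A] [Algebra R A]

def mulStabilizer (W : Submodule R A) : Subalgebra R A where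
  carrier := {a | ∀ w ∈ W, a * w ∈ W}
  mul_mem' ha hb w hw := by simpa only [mul_assoc] using ha _ (hb w hw)
  add_mem' ha hb w hw := by simpa only [add_mul] using W.add_mem (ha w hw) (hb w hw)
  algebraMap_mem' r w hw := by
    simpa only [Algebra.algebraMap_eq_smul_one, smul_mul_assoc, one_mul] using W.smul_mem r hw

theorem mem_mulStabilizer {W : Submodule R A} {a : A} :
    a ∈ W.mulStabilizer ↔ ∀ w ∈ W, a * w ∈ W :=
  Iff.rfl

theorem mem_mulStabilizer_span {ι : Type*} {f : ι → A} {a : A}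
    (h : ∀ i, a * f i ∈ span R (Set.range f)) : a ∈ (span R (Set.range f)).mulStabilizer := by
  intro w hw
  induction hw using span_induction with
  | mem _ hx => obtain ⟨i, rfl⟩ := hx; exact h i
  | zero => simp
  | add x y _ _ hx hy => rw [mul_add]; exact add_mem hx hy
  | smul r x _ hx => rw [mul_smul_comm]; exact smul_mem _ r hx

theorem eq_top_of_mulStabilizer_eq_top {W : Submodule R A} (hW : W.mulStabilizer = ⊤)
    {u : A} (hu : IsUnit u) (huW : u ∈ W) : W = ⊤ := by
  refine eq_top_iff.mpr fun x _ => ?_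
  have hx : x * ↑hu.unit⁻¹ * u = x := by simp [mul_assoc]
  rw [← hx]
  exact mem_mulStabilizer.mp (hW ▸ Algebra.mem_top) u huW

end Submodule

namespace Subalgebra

variable {K ι : Type*} [Field K] (A : Subalgebra K (ι → K))

theorem exists_mem_apply_eq_zero_apply_eq_one (hA : (A : Set (ι → K)).SeparatesPoints)
    {i k : ι} (hik : i ≠ k) : ∃ h ∈ A, h i = 0 ∧ h k = 1 := by
  obtain ⟨g, hgA, hg⟩ := hA hik
  refine ⟨(g k - g i)⁻¹ • (g - algebraMap K _ (g i)), ?_, ?_, ?_⟩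
  · exact A.smul_mem (A.sub_mem hgA (A.algebraMap_mem _)) _
  · simp
  · simp [inv_mul_cancel₀ (sub_ne_zero.mpr hg.symm)]

theorem eq_top_of_separatesPoints [Fintype ι] [DecidableEq ι]
    (hA : (A : Set (ι → K)).SeparatesPoints) : A = ⊤ := by
  have hsingle (k : ι) : Pi.single k 1 ∈ A := by
    have (i : ι) : ∃ h ∈ A, h k = 1 ∧ (i ≠ k → h i = 0) := by
      by_cases hik : i = k
      · exact ⟨1, A.one_mem, rfl, fun hne => (hne hik).elim⟩
      · obtain ⟨h, hhA, hi, hk⟩ := A.exists_mem_apply_eq_zero_apply_eq_one hA hik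
        exact ⟨h, hhA, hk, fun _ => hi⟩
    choose h hhA hk hi using this
    convert A.prod_mem (t := Finset.univ) fun i _ => hhA i
    ext m
    rw [Finset.prod_apply]
    by_cases hm : m = k
    · subst hm; simp [hk]
    · rw [Pi.single_eq_of_ne hm]
      exact (Finset.prod_eq_zero (f := fun c => h c m) (Finset.mem_univ m) (hi m hm)).symm
  refine eq_top_iff.mpr fun x _ => ?_
  rw [← Finset.univ_sum_single x]
  refine A.sum_mem fun k _ => ?_
  convert A.smul_mem (hsingle k) (x k) using 1
  rw [← Pi.single_smul, smul_eq_mul, mul_one]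

end Subalgebra

theorem Matrix.pos_mulVec_of_mem_rowStochastic {R n : Type*} [Fintype n] [DecidableEq n]
    [Semiring R] [LinearOrder R] [IsStrictOrderedRing R] {M : Matrix n n R}
    (hM : M ∈ rowStochastic R n) {x : n → R} (hx : ∀ j, 0 < x j) (i : n) : 0 < (M *ᵥ x) i := by
  obtain ⟨j, -, hj⟩ : ∃ j ∈ Finset.univ, (0 : R) < M i j := by
    refine Finset.exists_lt_of_sum_lt (f := fun _ => (0 : R)) ?_
    simp [sum_row_of_mem_rowStochastic hM i]
  exact Finset.sum_pos' (fun k _ => mul_nonneg (nonneg_of_mem_rowStochastic hM) (hx k).le)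
    ⟨j, Finset.mem_univ j, mul_pos hj (hx j)⟩

open MeasureTheory in
theorem exists_point_extending_rank_general
    {q K t : ℕ} (ht : 0 < t) (htK : t ≤ K - 1)
    (v : Fin t → (Fin K → ℝ)) (hv : LinearIndependent ℝ v)
    (hv1pos : ∀ k, 0 < v ⟨0, ht⟩ k)
    (Γ : Matrix (Fin K) (Fin K) ℝ)
    (hΓnonneg : ∀ i j, 0 ≤ Γ i j)
    (hΓrows : ∀ i, ∑ j, Γ i j = 1)
    (hΓrank : IsUnit Γ)
    (S : Set (Fin q → ℝ))
    (F : Fin K → (Fin q → ℝ) → ℝ)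
    (hdistinct : ∀ i j : Fin K, i ≠ j → ∃ y ∈ S, F i y ≠ F j y) :
    ∃ y ∈ S, ∃ j : Fin t,
      LinearIndependent ℝ
        (Fin.snoc (fun i : Fin t => Γ.mulVec (v i))
          ((Matrix.diagonal (fun k => F k y)).mulVec (Γ.mulVec (v j)))
          : Fin (t + 1) → (Fin K → ℝ)) := by
  set W := Submodule.span ℝ (Set.range fun i => Γ *ᵥ v i)
  have hΓv : LinearIndependent ℝ fun i => Γ *ᵥ v i :=
    hv.map' Γ.mulVecLin (LinearMap.ker_eq_bot.mpr (mulVec_injective_iff_isUnit.mpr hΓrank))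
  by_contra! hcon
  have hstab (y : Fin q → ℝ) (hy : y ∈ S) : (fun k => F k y) ∈ W.mulStabilizer :=
    Submodule.mem_mulStabilizer_span fun j => by
      by_contra h
      refine hcon y hy j (linearIndependent_finSnoc.mpr ⟨hΓv, ?_⟩)
      convert h using 2
      exact funext (mulVec_diagonal _ _)
  have hWtop : W = ⊤ := by
    refine W.eq_top_of_mulStabilizer_eq_top ?_ (u := Γ *ᵥ v ⟨0, ht⟩) ?_
      (Submodule.subset_span ⟨_, rfl⟩)
    · refine Subalgebra.eq_top_of_separatesPoints _ fun i j hij => ?_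
      obtain ⟨y, hy, hne⟩ := hdistinct i j hij
      exact ⟨_, hstab y hy, hne⟩
    · refine Pi.isUnit_iff.mpr fun k => (pos_mulVec_of_mem_rowStochastic ?_ hv1pos k).ne'.isUnit
      exact mem_rowStochastic_iff_sum.mpr ⟨hΓnonneg, hΓrows⟩
  have hdim : Module.finrank ℝ W = t := (finrank_span_eq_card hΓv).trans (Fintype.card_fin t)
  rw [hWtop, finrank_top, Module.finrank_fin_fun] at hdim
  omega

open MeasureTheory in
/-- Key technical lemma: given linearly independent `v₁,…,v_t` (entries of `v₁` positive),
a full-rank stochastic matrix `Γ` and pairwise distinct distribution functions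
`F₁,…,F_K` on `S ⊆ ℝ^q`, there are `y ∈ S` and `j ≤ t` with
`[Γv₁, …, Γv_t, D_y Γ v_j]` of full rank `t+1`. -/
theorem exists_point_extending_rank
    {q K t : ℕ} (ht : 0 < t) (htK : t ≤ K - 1)
    (v : Fin t → (Fin K → ℝ)) (hv : LinearIndependent ℝ v)
    (hv1pos : ∀ k, 0 < v ⟨0, ht⟩ k)
    (Γ : Matrix (Fin K) (Fin K) ℝ)
    (hΓnonneg : ∀ i j, 0 ≤ Γ i j)
    (hΓrows : ∀ i, ∑ j, Γ i j = 1)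
    (hΓrank : IsUnit Γ)
    (S : Set (Fin q → ℝ))
    (μ : Fin K → Measure (Fin q → ℝ)) (hprob : ∀ k, IsProbabilityMeasure (μ k))
    (F : Fin K → (Fin q → ℝ) → ℝ)
    (hF : ∀ k y, F k y = (μ k {x | x ≤ y}).toReal)
    (hdistinct : ∀ i j : Fin K, i ≠ j → ∃ y ∈ S, F i y ≠ F j y) :
    ∃ y ∈ S, ∃ j : Fin t,
      LinearIndependent ℝ
        (Fin.snoc (fun i : Fin t => Γ.mulVec (v i))
          ((Matrix.diagonal (fun k => F k y)).mulVec (Γ.mulVec (v j)))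
          : Fin (t + 1) → (Fin K → ℝ)) :=
  exists_point_extending_rank_general ht htK v hv hv1pos Γ hΓnonneg hΓrows hΓrank S F hdistinct
end

section
/- If Γ has linearly independent rows γ₁, …, γ_K and S_i (i = 1,…,K−t) are subspaces such that each S_i ⊆ span{γ₁, …, γ_t, γ_{t+i}} with S_i not contained in span{γ₁,…,γ_t} and dim S_i ≥ 2, then dim span{S₁ ∪ ⋯ ∪ S_{K−t}} ≥ K − t + 1. -/
/-!
Write `W = span{γ_j : j < t}` and `T = ⨆ Sᵢ`. Since `Sᵢ ⊆ W ⊔ ℝ γ_{t+i}` but `Sᵢ ⊄ W`, the vector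
`γ_{t+i}` lies in `W ⊔ Sᵢ`, so `W ⊔ T` is the whole space. Since moreover `dim Sᵢ ≥ 2`, the
intersection `Sᵢ ∩ W`, hence `T ∩ W`, is nonzero. Then
`dim T = dim (W ⊔ T) + dim (W ⊓ T) - dim W ≥ K + 1 - t`.
-/

open Module Submodule

section

variable {K V : Type*} [DivisionRing K] [AddCommGroup V] [Module K V]

theorem Submodule.mem_sup_of_le_sup_span_singleton {W p : Submodule K V} {x : V}
    (hp : p ≤ W ⊔ K ∙ x) (hpW : ¬ p ≤ W) : x ∈ W ⊔ p := by
  obtain ⟨v, hvp, hvW⟩ := SetLike.not_le_iff_exists.1 hpW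
  obtain ⟨w, hw, y, hy, rfl⟩ := mem_sup.1 (hp hvp)
  obtain ⟨c, rfl⟩ := mem_span_singleton.1 hy
  have hc : c ≠ 0 := by
    rintro rfl
    exact hvW (by simpa using hw)
  have hx : x = c⁻¹ • ((w + c • x) - w) := by
    rw [add_sub_cancel_left, smul_smul, inv_mul_cancel₀ hc, one_smul]
  rw [hx]
  exact smul_mem _ _ (sub_mem (mem_sup_right hvp) (mem_sup_left hw))

theorem Submodule.finrank_le_finrank_inf_add_one [FiniteDimensional K V]
    {W p : Submodule K V} {x : V} (hp : p ≤ W ⊔ K ∙ x) :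
    finrank K p ≤ finrank K ↥(p ⊓ W) + 1 := by
  have hsup : finrank K ↥(p ⊔ W) ≤ finrank K W + 1 :=
    calc finrank K ↥(p ⊔ W)
        ≤ finrank K ↥(W ⊔ K ∙ x) := finrank_mono (sup_le hp le_sup_left)
      _ ≤ finrank K W + finrank K (K ∙ x) := finrank_add_le_finrank_add_finrank _ _
      _ ≤ finrank K W + 1 := by
        gcongr
        simpa using finrank_span_le_card (R := K) ({x} : Set V)
  have := finrank_sup_add_finrank_inf_eq p W
  omega

theorem Submodule.sup_iSup_eq_top_of_le_sup_span_singleton {ι : Type*}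
    {W : Submodule K V} {x : ι → V} (hx : W ⊔ span K (Set.range x) = ⊤)
    {S : ι → Submodule K V} (hS : ∀ i, S i ≤ W ⊔ K ∙ x i) (hSW : ∀ i, ¬ S i ≤ W) :
    W ⊔ ⨆ i, S i = ⊤ := by
  refine eq_top_iff.2 (hx ▸ sup_le le_sup_left (span_le.2 ?_))
  rintro _ ⟨i, rfl⟩
  exact sup_le_sup_left (le_iSup S i) W (mem_sup_of_le_sup_span_singleton (hS i) (hSW i))

theorem Submodule.finrank_add_finrank_le_finrank_iSup_add [FiniteDimensional K V] {ι : Type*}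
    {W : Submodule K V} {x : ι → V} (hx : W ⊔ span K (Set.range x) = ⊤)
    {S : ι → Submodule K V} (hS : ∀ i, S i ≤ W ⊔ K ∙ x i) (hSW : ∀ i, ¬ S i ≤ W) (i₀ : ι) :
    finrank K V + finrank K (S i₀) ≤ finrank K ↥(⨆ i, S i) + finrank K W + 1 := by
  have htop := finrank_sup_add_finrank_inf_eq W (⨆ i, S i)
  rw [sup_iSup_eq_top_of_le_sup_span_singleton hx hS hSW, finrank_top] at htop
  have hS₀ : finrank K (S i₀) ≤ finrank K ↥(W ⊓ ⨆ i, S i) + 1 :=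
    calc finrank K (S i₀)
        ≤ finrank K ↥(S i₀ ⊓ W) + 1 := finrank_le_finrank_inf_add_one (hS i₀)
      _ ≤ finrank K ↥(W ⊓ ⨆ i, S i) + 1 := by
        gcongr
        exact finrank_mono (inf_comm (S i₀) W ▸ inf_le_inf_left W (le_iSup S i₀))
  omega

end

open Submodule in
/-- Dimension counting: if each subspace `Sᵢ ⊆ span{γ₁,…,γ_t,γ_{t+i}}` has dimension at
least 2 and is not contained in `span{γ₁,…,γ_t}`, then the span of all the `Sᵢ` has
dimension at least `K − t + 1`. -/
theorem dim_span_union_ge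
    {K t : ℕ} (htK : t + 1 ≤ K)
    (γ : Fin K → (Fin K → ℝ)) (hγ : LinearIndependent ℝ γ)
    (S : Fin (K - t) → Submodule ℝ (Fin K → ℝ))
    (hsub : ∀ i : Fin (K - t),
      S i ≤ span ℝ (γ '' {j : Fin K | (j : ℕ) < t}) ⊔
        span ℝ {γ ⟨t + (i : ℕ), by have := i.isLt; omega⟩})
    (hnot : ∀ i : Fin (K - t), ¬ S i ≤ span ℝ (γ '' {j : Fin K | (j : ℕ) < t}))
    (hdim : ∀ i : Fin (K - t), 2 ≤ Module.finrank ℝ (S i)) :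
    K - t + 1 ≤ Module.finrank ℝ ↥(⨆ i : Fin (K - t), S i) := by
  have hW : finrank ℝ (span ℝ (γ '' {j : Fin K | (j : ℕ) < t})) ≤ t := by
    rw [← Fin.range_castLE (by omega : t ≤ K), ← Set.range_comp]
    exact (finrank_range_le_card (R := ℝ) _).trans_eq (Fintype.card_fin t)
  set W := span ℝ (γ '' {j : Fin K | (j : ℕ) < t})
  have hx : W ⊔ span ℝ (Set.range fun i : Fin (K - t) ↦ γ ⟨t + i, by omega⟩) = ⊤ := by
    rw [eq_top_iff, ← hγ.span_eq_top_of_card_eq_finrank' (by simp), span_le]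
    rintro _ ⟨j, rfl⟩
    by_cases hj : (j : ℕ) < t
    · exact mem_sup_left (subset_span ⟨j, hj, rfl⟩)
    · exact mem_sup_right
        (subset_span ⟨⟨j - t, by omega⟩, congrArg γ (Fin.ext (by simp only; omega))⟩)
  have hrank := finrank_add_finrank_le_finrank_iSup_add hx hsub hnot ⟨0, by omega⟩
  rw [finrank_fin_fun] at hrank
  have := hdim ⟨0, by omega⟩
  omega
end

section
/- Submultiplicativity of the maximized HMM likelihood: define M_{s,t}(θ) = max_{k} Σ_{x₂,…,x_{t−s}} f_{k}(Y_{s+1}) α_{k,x₂} f_{x₂}(Y_{s+2}) ∏_{i=3}^{t−s} α_{x_{i−1},x_i} f_{x_i}(Y_{s+i}). Then M_{s,t}(θ) ≤ M_{s,u}(θ) · M_{u,t}(θ) for all s < u < t, so that log M_{s,t}(θ) is a subadditive process. -/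
open Matrix in
/-- The maximized HMM partial likelihood
`M_{s,t} = max_k (D_{Y_{s+1}} Γ D_{Y_{s+2}} Γ ⋯ D_{Y_t} 1)_k`. -/
noncomputable def hmmMaxLik {K : ℕ} [NeZero K] {S : Type*}
    (Γ : Matrix (Fin K) (Fin K) ℝ) (f : Fin K → S → ℝ) (Y : ℕ → S)
    (s t : ℕ) : ℝ :=
  Finset.univ.sup' Finset.univ_nonempty (fun k : Fin K =>
    (((List.range (t - s)).map
        (fun i => Matrix.diagonal (fun j : Fin K => f j (Y (s + 1 + i))) * Γ)).prod.mulVec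
      (fun _ => (1 : ℝ))) k)

/-!
`M_{s,t}` is the maximal row sum of the nonnegative transfer matrix
`P_{s,t} = D_{Y_{s+1}} Γ ⋯ D_{Y_t} Γ`, i.e. its `ℓ∞` operator norm. Transfer matrices compose,
`P_{s,t} = P_{s,u} P_{u,t}`, and operator norms are submultiplicative.
-/

open Finset Matrix

attribute [local instance] Matrix.linftyOpNormedAddCommGroup

namespace Matrix

def entrywiseNonneg (R n : Type*) [Fintype n] [DecidableEq n] [Semiring R] [PartialOrder R]
    [IsOrderedRing R] : Submonoid (Matrix n n R) where
  carrier := {M | ∀ i j, 0 ≤ M i j}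
  mul_mem' hM hN i j := sum_nonneg fun k _ => mul_nonneg (hM i k) (hN k j)
  one_mem' i j := by
    rw [one_apply]
    split_ifs
    exacts [zero_le_one, le_rfl]

theorem diagonal_mem_entrywiseNonneg {R n : Type*} [Fintype n] [DecidableEq n] [Semiring R]
    [PartialOrder R] [IsOrderedRing R] {d : n → R} (hd : ∀ i, 0 ≤ d i) :
    diagonal d ∈ entrywiseNonneg R n := by
  intro i j
  rw [diagonal_apply]
  split_ifs
  exacts [hd i, le_rfl]

theorem linfty_opNorm_eq_sup'_mulVec_one {m n : Type*} [Fintype m] [Fintype n] [Nonempty m]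
    {A : Matrix m n ℝ} (hA : ∀ i j, 0 ≤ A i j) :
    ‖A‖ = univ.sup' univ_nonempty (fun i => (A *ᵥ 1) i) := by
  rw [linfty_opNorm_def, ← sup'_eq_sup univ_nonempty, apply_sup'_eq_sup'_comp _ _ NNReal.coe_max]
  refine sup'_congr _ rfl fun i _ => ?_
  simp [mulVec, dotProduct, Real.norm_of_nonneg (hA i _)]

end Matrix

section HMM

variable {K : ℕ} {S : Type*} (Γ : Matrix (Fin K) (Fin K) ℝ) (f : Fin K → S → ℝ) (Y : ℕ → S)

noncomputable def hmmTransfer (s t : ℕ) : Matrix (Fin K) (Fin K) ℝ :=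
  ((List.range (t - s)).map fun i => diagonal (fun j => f j (Y (s + 1 + i))) * Γ).prod

theorem hmmTransfer_mul {s u t : ℕ} (hsu : s ≤ u) (hut : u ≤ t) :
    hmmTransfer Γ f Y s u * hmmTransfer Γ f Y u t = hmmTransfer Γ f Y s t := by
  rw [hmmTransfer, hmmTransfer, hmmTransfer, show t - s = (u - s) + (t - u) by omega,
    List.range_add, List.map_append, List.prod_append, List.map_map]
  congr 3
  funext i
  rw [Function.comp_apply, show s + 1 + (u - s + i) = u + 1 + i by omega]

variable {Γ f}

theorem hmmTransfer_mem_entrywiseNonneg (hΓ : ∀ i j, 0 ≤ Γ i j) (hf : ∀ k x, 0 ≤ f k x)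
    (s t : ℕ) : hmmTransfer Γ f Y s t ∈ entrywiseNonneg ℝ (Fin K) := by
  refine Submonoid.list_prod_mem _ fun M hM => ?_
  obtain ⟨i, -, rfl⟩ := List.mem_map.1 hM
  exact mul_mem (diagonal_mem_entrywiseNonneg fun j => hf j _) hΓ

theorem hmmMaxLik_eq_linfty_opNorm [NeZero K] (hΓ : ∀ i j, 0 ≤ Γ i j) (hf : ∀ k x, 0 ≤ f k x)
    (s t : ℕ) : hmmMaxLik Γ f Y s t = ‖hmmTransfer Γ f Y s t‖ :=
  (linfty_opNorm_eq_sup'_mulVec_one (hmmTransfer_mem_entrywiseNonneg Y hΓ hf s t)).symm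

end HMM

theorem hmmMaxLik_submultiplicative_general {K : ℕ} [NeZero K] {S : Type*}
    (Γ : Matrix (Fin K) (Fin K) ℝ)
    (hΓnonneg : ∀ i j, 0 ≤ Γ i j)
    (f : Fin K → S → ℝ) (hf : ∀ k x, 0 ≤ f k x)
    (Y : ℕ → S) :
    ∀ s u t : ℕ, s < u → u < t →
      hmmMaxLik Γ f Y s t ≤ hmmMaxLik Γ f Y s u * hmmMaxLik Γ f Y u t := by
  intro s u t hsu hut
  simp only [hmmMaxLik_eq_linfty_opNorm Y hΓnonneg hf]
  rw [← hmmTransfer_mul Γ f Y hsu.le hut.le]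
  exact linfty_opNorm_mul _ _

/-- Submultiplicativity of the maximized HMM likelihood:
`M_{s,t}(θ) ≤ M_{s,u}(θ) · M_{u,t}(θ)` for `s < u < t`. -/
theorem hmmMaxLik_submultiplicative {K : ℕ} [NeZero K] {S : Type*}
    (Γ : Matrix (Fin K) (Fin K) ℝ)
    (hΓnonneg : ∀ i j, 0 ≤ Γ i j) (hΓrows : ∀ i, ∑ j, Γ i j = 1)
    (f : Fin K → S → ℝ) (hf : ∀ k x, 0 ≤ f k x)
    (Y : ℕ → S) :
    ∀ s u t : ℕ, s < u → u < t →
      hmmMaxLik Γ f Y s t ≤ hmmMaxLik Γ f Y s u * hmmMaxLik Γ f Y u t :=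
  hmmMaxLik_submultiplicative_general Γ hΓnonneg f hf Y
end
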